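/- Let r > 0 and let a, b₁, b₃ be real numbers. If for all s with |s| < r one has 1 − b₁r² + 2b₁s² + s·√(r²−s²)·(a + 4b₃) = 0, then a contradiction follows; i.e., there are no such a, b₁, b₃. -/
import Mathlib


/-- There are no reals `a, b₁, b₃` such that
`1 − b₁r² + 2b₁s² + s·√(r²−s²)·(a + 4b₃) = 0` for all `|s| < r`. -/
theorem no_vanishing_denominator (r a b₁ b₃ : ℝ) (hr : 0 < r)
    (h : ∀ s : ℝ, |s| < r →
      1 - b₁ * r ^ 2 + 2 * b₁ * s ^ 2 + s * Real.sqrt (r ^ 2 - s ^ 2) * (a + 4 * b₃) = 0) :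
    False := by
  have h0 := h 0 (by simpa using hr)
  have habs : |r / 2| < r := by rw [abs_of_pos (by linarith)]; linarith
  have habs' : |-(r / 2)| < r := by rw [abs_neg]; exact habs
  have h1 := h (r / 2) habs
  have h2 := h (-(r / 2)) habs'
  have hsq : ((-(r / 2)) ^ 2 : ℝ) = (r / 2) ^ 2 := by ring
  rw [hsq] at h2
  nlinarith [h1, h2, h0, sq_nonneg r]
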